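/- The following hold: (iii) ∫ x² dℙ_n^ε(x) → σ² almost surely; (iv) ∫ |x| dℙ_n^ε(x) → E|ε| almost surely; (v) limsup_{n→∞} ∫ |x|³ dℙ_n^ε(x) < ∞ almost surely. (Lemma 4.8(iii)–(v): moments of the centered residual empirical distribution.) -/

import Mathlib

/-!
Write the residual of the least squares fit as `ε_i + d_i`, where
`d_i = stepFn θ₀ Z_i − stepFn θ̂_n Z_i` is the difference of the true and the fitted step function.
Shifting both fitted levels by a constant shows that the residuals have empirical mean zero, so
centering changes nothing. Comparing the residual sum of squares at `θ̂_n` and at `θ₀` gives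
`ℙ_n d² ≤ −2 ℙ_n(ε d)`, and the cross term is a combination, with coefficients bounded by the
levels, of `ℙ_n ε` and of the partial sums `A_n(ζ) = ℙ_n(ε 1{Z ≤ ζ})`. These tend to `0`
uniformly in `ζ ∈ [a, b]` almost surely: the strong law gives convergence at rational `ζ`, and
Pólya's argument upgrades it because the parts coming from `ε⁺` and `ε⁻` are monotone in `ζ`
with a continuous common limit (`Z` has a density). Since observations with `Z < a` (resp.
`Z > b`) see only the level `α` (resp. `β`), `ℙ_n d²` dominates a positive multiple of
`(α̂_n − α₀)² + (β̂_n − β₀)²`; the resulting quadratic inequality forces consistency of the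
levels and then `ℙ_n d² → 0`. The moments of `ε + d` follow from those of `ε` by
Cauchy–Schwarz, and the third moment stays bounded because `|d_i| ≤ 1 + |α₀ − β₀|` eventually.
-/

open MeasureTheory Filter Set

noncomputable section

/-- The least squares criterion `m_θ(x) = −(y − α·1{z ≤ ζ} − β·1{z > ζ})²`
for `θ = (α, β, ζ)` and `x = (y, z)`. -/
def mfn (θ : ℝ × ℝ × ℝ) (x : ℝ × ℝ) : ℝ :=
  -(x.1 - (if x.2 ≤ θ.2.2 then θ.1 else θ.2.1)) ^ 2

/-- The residual function `ε̃_θ(y,z) = y − α·1{z ≤ ζ} − β·1{z > ζ}` for `θ = (α,β,ζ)`. -/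
def epstil (θ : ℝ × ℝ × ℝ) (x : ℝ × ℝ) : ℝ :=
  x.1 - (if x.2 ≤ θ.2.2 then θ.1 else θ.2.1)

open Topology ProbabilityTheory
open scoped BigOperators

theorem expect_range_eq_inv_mul_sum (n : ℕ) (f : ℕ → ℝ) :
    𝔼 i ∈ Finset.range n, f i = (n : ℝ)⁻¹ * ∑ i ∈ Finset.range n, f i := by
  rw [Finset.expect_eq_sum_div_card, Finset.card_range, div_eq_inv_mul]

theorem Finset.expect_const_le {ι : Type*} (s : Finset ι) {c : ℝ} (hc : 0 ≤ c) :
    𝔼 _i ∈ s, c ≤ c := by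
  rcases s.eq_empty_or_nonempty with rfl | hs
  · simpa using hc
  · rw [Finset.expect_const hs]

theorem abs_expect_mul_le_sqrt {ι : Type*} (s : Finset ι) (f g : ι → ℝ) :
    |𝔼 i ∈ s, f i * g i| ≤ √((𝔼 i ∈ s, f i ^ 2) * 𝔼 i ∈ s, g i ^ 2) :=
  Real.abs_le_sqrt (Finset.expect_mul_sq_le_sq_mul_sq s f g)

theorem abs_expect_le_sqrt {ι : Type*} (s : Finset ι) (f : ι → ℝ) :
    |𝔼 i ∈ s, f i| ≤ √(𝔼 i ∈ s, f i ^ 2) := by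
  rcases s.eq_empty_or_nonempty with rfl | hs
  · simp
  simpa [Finset.expect_const hs] using abs_expect_mul_le_sqrt s f 1

section PerturbedMoments

variable {κ ι : Type*} {l : Filter κ} {s : κ → Finset ι} {e r : κ → ι → ℝ}

theorem tendsto_expect_sq_of_tendsto_expect_sq_sub {σ2 : ℝ}
    (he : Tendsto (fun n => 𝔼 i ∈ s n, e n i ^ 2) l (𝓝 σ2))
    (hd : Tendsto (fun n => 𝔼 i ∈ s n, (r n i - e n i) ^ 2) l (𝓝 0)) :
    Tendsto (fun n => 𝔼 i ∈ s n, r n i ^ 2) l (𝓝 σ2) := by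
  have hcross : Tendsto (fun n => 𝔼 i ∈ s n, e n i * (r n i - e n i)) l (𝓝 0) := by
    refine squeeze_zero_norm (fun n => abs_expect_mul_le_sqrt _ _ _) ?_
    simpa using (he.mul hd).sqrt
  have hexp : ∀ n, 𝔼 i ∈ s n, r n i ^ 2 = 𝔼 i ∈ s n, e n i ^ 2
      + 2 * 𝔼 i ∈ s n, e n i * (r n i - e n i) + 𝔼 i ∈ s n, (r n i - e n i) ^ 2 := fun n => by
    rw [Finset.mul_expect, ← Finset.expect_add_distrib, ← Finset.expect_add_distrib]
    exact Finset.expect_congr rfl fun i _ => by ring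
  simpa [hexp] using (he.add (hcross.const_mul 2)).add hd

theorem tendsto_expect_abs_of_tendsto_expect_sq_sub {μ : ℝ}
    (he : Tendsto (fun n => 𝔼 i ∈ s n, |e n i|) l (𝓝 μ))
    (hd : Tendsto (fun n => 𝔼 i ∈ s n, (r n i - e n i) ^ 2) l (𝓝 0)) :
    Tendsto (fun n => 𝔼 i ∈ s n, |r n i|) l (𝓝 μ) := by
  have hdiff : Tendsto (fun n => 𝔼 i ∈ s n, |r n i| - 𝔼 i ∈ s n, |e n i|) l (𝓝 0) := by
    refine squeeze_zero_norm (fun n => ?_) (by simpa using hd.sqrt)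
    rw [Real.norm_eq_abs, ← Finset.expect_sub_distrib]
    refine (Finset.abs_expect_le _ _).trans ((Finset.expect_le_expect fun i _ =>
      abs_abs_sub_abs_le_abs_sub _ _).trans ?_)
    simpa only [sq_abs] using
      (le_abs_self _).trans (abs_expect_le_sqrt (s n) fun i => |r n i - e n i|)
  simpa using he.add hdiff

theorem isBoundedUnder_expect_abs_pow {p : ℕ} {c : ℝ} (hc : 0 ≤ c)
    (he : IsBoundedUnder (· ≤ ·) l fun n => 𝔼 i ∈ s n, |e n i| ^ p)
    (hd : ∀ᶠ n in l, ∀ i ∈ s n, |r n i - e n i| ≤ c) :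
    IsBoundedUnder (· ≤ ·) l fun n => 𝔼 i ∈ s n, |r n i| ^ p := by
  obtain ⟨M, hM⟩ := he
  refine isBoundedUnder_of_eventually_le (a := 2 ^ (p - 1) * (M + c ^ p)) ?_
  filter_upwards [hd, hM] with n hn hMn
  calc 𝔼 i ∈ s n, |r n i| ^ p ≤ 𝔼 i ∈ s n, 2 ^ (p - 1) * (|e n i| ^ p + c ^ p) :=
        Finset.expect_le_expect fun i hi => by
          refine (pow_le_pow_left₀ (abs_nonneg _) ?_ p).trans (add_pow_le (abs_nonneg _) hc p)
          linarith [abs_sub_abs_le_abs_sub (r n i) (e n i), hn i hi]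
    _ ≤ 2 ^ (p - 1) * (M + c ^ p) := by
        rw [← Finset.mul_expect, Finset.expect_add_distrib]
        gcongr
        · exact hMn
        · exact Finset.expect_const_le _ (pow_nonneg hc p)

end PerturbedMoments

theorem le_sqrt_add_of_sq_le {u A B : ℝ} (hA : 0 ≤ A) (hB : 0 ≤ B) (h : u ^ 2 ≤ A + B * u) :
    u ≤ √A + B := by
  by_contra hc
  push Not at hc
  nlinarith [Real.sq_sqrt hA, Real.sqrt_nonneg A]

theorem tendsto_zero_of_sq_le_mul_add {ι : Type*} {l : Filter ι} {v s : ι → ℝ} {A B : ℝ}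
    (hA : 0 ≤ A) (hB : 0 ≤ B) (hv : ∀ n, 0 ≤ v n) (hs0 : ∀ n, 0 ≤ s n) (hs : Tendsto s l (𝓝 0))
    (h : ∀ᶠ n in l, v n ^ 2 ≤ s n * (A + B * v n)) : Tendsto v l (𝓝 0) := by
  have hlim : Tendsto (fun n => √(s n * A) + s n * B) l (𝓝 0) := by
    simpa using ((hs.mul_const A).sqrt).add (hs.mul_const B)
  refine squeeze_zero' (Eventually.of_forall hv) ?_ hlim
  filter_upwards [h] with n hn
  exact le_sqrt_add_of_sq_le (mul_nonneg (hs0 n) hA) (mul_nonneg (hs0 n) hB) (by linarith)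

theorem TendstoUniformlyOn.tendsto_comp_of_eventually_mem {ι α β : Type*} [PseudoMetricSpace β]
    {l : Filter ι} {F : ι → α → β} {c : β} {s : Set α} (h : TendstoUniformlyOn F (fun _ => c) l s)
    {g : ι → α} (hg : ∀ᶠ n in l, g n ∈ s) : Tendsto (fun n => F n (g n)) l (𝓝 c) :=
  Metric.tendsto_nhds.2 fun ε hε => ((Metric.tendstoUniformlyOn_iff.1 h ε hε).and hg).mono
    fun n hn => by rw [dist_comm]; exact hn.1 _ hn.2

theorem Dense.exists_finset_bracket {D : Set ℝ} (hD : Dense D) (a b : ℝ) {δ : ℝ} (hδ : 0 < δ) :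
    ∃ F : Finset ℝ, ↑F ⊆ D ∧
      ∀ x ∈ Icc a b, ∃ p ∈ F, ∃ q ∈ F, p ≤ x ∧ x ≤ q ∧ q - p < δ := by
  set η := δ / 3 with hη_def
  have hη : 0 < η := by positivity
  choose r hrD hr using fun j : ℕ =>
    hD.exists_between (x := a + (j - 1) * η) (y := a + j * η) (by linarith)
  refine ⟨(Finset.range (⌈(b - a) / η⌉₊ + 3)).image r, ?_, fun x hx => ?_⟩
  · simpa [Set.subset_def] using fun j _ => hrD j
  set j := ⌊(x - a) / η⌋₊
  have hjx : a + j * η ≤ x := by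
    have := Nat.floor_le (div_nonneg (sub_nonneg.2 hx.1) hη.le)
    rw [le_div_iff₀ hη] at this; linarith
  have hxj : x < a + (j + 1) * η := by
    have := Nat.lt_floor_add_one ((x - a) / η)
    rw [div_lt_iff₀ hη] at this; linarith
  have hjb : j ≤ ⌈(b - a) / η⌉₊ :=
    (Nat.floor_le_floor (by gcongr; exact hx.2)).trans (Nat.floor_le_ceil _)
  have h0 := hr j
  have h2 := hr (j + 2)
  push_cast at h0 h2
  refine ⟨r j, Finset.mem_image_of_mem _ (by simp; omega), r (j + 2),
    Finset.mem_image_of_mem _ (by simp; omega), ?_, ?_, ?_⟩ <;>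
    nlinarith [h0.1, h0.2, h2.1, h2.2]

theorem tendstoUniformlyOn_Icc_of_monotone_of_dense {ι : Type*} {l : Filter ι}
    {G : ι → ℝ → ℝ} {L : ℝ → ℝ} {D : Set ℝ} (hG : ∀ n, Monotone (G n)) (hL : Continuous L)
    (hD : Dense D) (hGL : ∀ x ∈ D, Tendsto (fun n => G n x) l (𝓝 (L x))) (a b : ℝ) :
    TendstoUniformlyOn G L l (Icc a b) := by
  rw [Metric.tendstoUniformlyOn_iff]
  intro ε hε
  obtain ⟨δ, hδ, hLδ⟩ := Metric.uniformContinuousOn_iff.1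
    ((isCompact_Icc (a := a - 1) (b := b + 1)).uniformContinuousOn_of_continuous
      hL.continuousOn) _ (half_pos hε)
  obtain ⟨F, hFD, hF⟩ := hD.exists_finset_bracket a b (lt_min hδ one_pos)
  have hGF : ∀ᶠ n in l, ∀ p ∈ F, dist (G n p) (L p) < ε / 2 :=
    (eventually_all_finset F).2 fun p hp => Metric.tendsto_nhds.1 (hGL p (hFD hp)) _ (half_pos hε)
  filter_upwards [hGF] with n hn x hx
  obtain ⟨p, hp, q, hq, hpx, hxq, hpq⟩ := hF x hx
  have hpq' := lt_min_iff.1 hpq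
  have hx' : x ∈ Icc (a - 1) (b + 1) := ⟨by linarith [hx.1], by linarith [hx.2]⟩
  have hLp := hLδ x hx' p ⟨by linarith [hx.1], by linarith [hx.2]⟩
    (by rw [Real.dist_eq, abs_lt]; constructor <;> linarith)
  have hLq := hLδ x hx' q ⟨by linarith [hx.1], by linarith [hx.2]⟩
    (by rw [Real.dist_eq, abs_lt]; constructor <;> linarith)
  have hGp := hn p hp
  have hGq := hn q hq
  rw [Real.dist_eq, abs_lt] at hLp hLq hGp hGq ⊢
  constructor <;> linarith [hG n hpx, hG n hxq]

theorem monotone_expect_indicator_Iic_mul {ι : Type*} (s : Finset ι) (z w : ι → ℝ)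
    (hw : ∀ i, 0 ≤ w i) : Monotone fun ζ => 𝔼 i ∈ s, (Iic ζ).indicator 1 (z i) * w i :=
  fun _ _ h => Finset.expect_le_expect fun i _ => mul_le_mul_of_nonneg_right
    (indicator_le_indicator_of_subset (Iic_subset_Iic.2 h) (fun _ => zero_le_one) _) (hw i)

theorem ProbabilityTheory.continuous_cdf {μ : Measure ℝ} [IsProbabilityMeasure μ]
    [NullSingletonClass μ] :
    Continuous (cdf μ) := by
  refine continuous_iff_continuousAt.2 fun x =>
    continuousAt_iff_continuous_left_right.2 ⟨?_, (cdf μ).right_continuous x⟩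
  have h := (cdf μ).measure_singleton x
  rw [measure_cdf, measure_singleton, eq_comm, ENNReal.ofReal_eq_zero, sub_nonpos] at h
  exact continuousWithinAt_Iio_iff_Iic.1 ((cdf μ).mono.continuousWithinAt_Iio_iff_leftLim_eq.2
    (le_antisymm ((cdf μ).mono.leftLim_le le_rfl) h))

def stepFn (θ : ℝ × ℝ × ℝ) (z : ℝ) : ℝ := if z ≤ θ.2.2 then θ.1 else θ.2.1

theorem epstil_sub_epstil (θ θ₀ : ℝ × ℝ × ℝ) (x : ℝ × ℝ) :
    epstil θ x - epstil θ₀ x = stepFn θ₀ x.2 - stepFn θ x.2 := by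
  simp only [epstil, stepFn]; ring

theorem abs_stepFn_sub_le (θ₀ θ : ℝ × ℝ × ℝ) (z : ℝ) :
    |stepFn θ₀ z - stepFn θ z| ≤ |θ.1 - θ₀.1| + |θ.2.1 - θ₀.2.1| + |θ₀.1 - θ₀.2.1| := by
  simp only [stepFn]
  split_ifs <;> refine abs_le.2 ⟨?_, ?_⟩ <;>
    linarith [le_abs_self (θ.1 - θ₀.1), neg_abs_le (θ.1 - θ₀.1), le_abs_self (θ.2.1 - θ₀.2.1),
      neg_abs_le (θ.2.1 - θ₀.2.1), le_abs_self (θ₀.1 - θ₀.2.1), neg_abs_le (θ₀.1 - θ₀.2.1)]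

theorem indicator_mul_sq_add_le_sq_stepFn_sub {a b z : ℝ} {θ₀ θ : ℝ × ℝ × ℝ}
    (h₀ : θ₀.2.2 ∈ Icc a b) (h : θ.2.2 ∈ Icc a b) :
    (Iio a).indicator 1 z * (θ.1 - θ₀.1) ^ 2 + (Ioi b).indicator 1 z * (θ.2.1 - θ₀.2.1) ^ 2
      ≤ (stepFn θ₀ z - stepFn θ z) ^ 2 := by
  obtain ⟨h₀a, h₀b⟩ := h₀
  obtain ⟨ha, hb⟩ := h
  simp only [indicator_apply, mem_Iio, mem_Ioi, Pi.one_apply, stepFn]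
  split_ifs <;> nlinarith

theorem abs_expect_mul_stepFn_le {ι : Type*} (s : Finset ι) (e z : ι → ℝ) (θ : ℝ × ℝ × ℝ) :
    |𝔼 i ∈ s, e i * stepFn θ (z i)| ≤ (|θ.1| + |θ.2.1|) *
      (|𝔼 i ∈ s, e i| + |𝔼 i ∈ s, (Iic θ.2.2).indicator 1 (z i) * e i|) := by
  have hsplit : 𝔼 i ∈ s, e i * stepFn θ (z i) = θ.2.1 * 𝔼 i ∈ s, e i
      + (θ.1 - θ.2.1) * 𝔼 i ∈ s, (Iic θ.2.2).indicator 1 (z i) * e i := by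
    rw [Finset.mul_expect, Finset.mul_expect, ← Finset.expect_add_distrib]
    refine Finset.expect_congr rfl fun i _ => ?_
    simp only [stepFn, indicator_apply, mem_Iic, Pi.one_apply]
    split_ifs <;> ring
  rw [hsplit]
  refine (abs_add_le _ _).trans ?_
  rw [abs_mul, abs_mul]
  nlinarith [abs_sub θ.1 θ.2.1, abs_nonneg θ.1, abs_nonneg θ.2.1,
    abs_nonneg (𝔼 i ∈ s, e i), abs_nonneg (𝔼 i ∈ s, (Iic θ.2.2).indicator 1 (z i) * e i)]

theorem expect_indicator_mul_sq_add_le {ι : Type*} (s : Finset ι) (z : ι → ℝ) {a b : ℝ}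
    {θ₀ θ : ℝ × ℝ × ℝ} (h₀ : θ₀.2.2 ∈ Icc a b) (h : θ.2.2 ∈ Icc a b) :
    (𝔼 i ∈ s, (Iio a).indicator 1 (z i)) * (θ.1 - θ₀.1) ^ 2
      + (𝔼 i ∈ s, (Ioi b).indicator 1 (z i)) * (θ.2.1 - θ₀.2.1) ^ 2
      ≤ 𝔼 i ∈ s, (stepFn θ₀ (z i) - stepFn θ (z i)) ^ 2 := by
  rw [Finset.expect_mul, Finset.expect_mul, ← Finset.expect_add_distrib]
  exact Finset.expect_le_expect fun i _ => indicator_mul_sq_add_le_sq_stepFn_sub h₀ h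

def IsLeastSquares (a b : ℝ) (x : ℕ → ℝ × ℝ) (n : ℕ) (θ : ℝ × ℝ × ℝ) : Prop :=
  θ.2.2 ∈ Icc a b ∧ ∀ θ' : ℝ × ℝ × ℝ, θ'.2.2 ∈ Icc a b →
    𝔼 i ∈ Finset.range n, mfn θ' (x i) ≤ 𝔼 i ∈ Finset.range n, mfn θ (x i)

namespace IsLeastSquares

variable {a b : ℝ} {x : ℕ → ℝ × ℝ} {n : ℕ} {θ θ₀ : ℝ × ℝ × ℝ}

theorem expect_epstil_eq_zero (h : IsLeastSquares a b x n θ) :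
    𝔼 i ∈ Finset.range n, epstil θ (x i) = 0 := by
  rcases n.eq_zero_or_pos with rfl | hn
  · simp
  set S := 𝔼 i ∈ Finset.range n, epstil θ (x i)
  -- Raising both levels by `S` changes the criterion by `+S²`, so optimality forces `S = 0`.
  have hshift : ∀ i, mfn (θ.1 + S, θ.2.1 + S, θ.2.2) (x i)
      = mfn θ (x i) + (2 * S * epstil θ (x i) - S ^ 2) := fun i => by
    simp only [mfn, epstil]; split_ifs <;> ring
  have key := h.2 (θ.1 + S, θ.2.1 + S, θ.2.2) h.1
  simp only [hshift, Finset.expect_add_distrib, Finset.expect_sub_distrib, ← Finset.mul_expect,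
    Finset.expect_const (Finset.nonempty_range_iff.2 hn.ne')] at key
  exact pow_eq_zero_iff two_ne_zero |>.1 (le_antisymm (by linarith) (sq_nonneg S))

theorem expect_sq_stepFn_sub_le (h : IsLeastSquares a b x n θ) (hθ₀ : θ₀.2.2 ∈ Icc a b) :
    𝔼 i ∈ Finset.range n, (stepFn θ₀ (x i).2 - stepFn θ (x i).2) ^ 2
      ≤ -2 * 𝔼 i ∈ Finset.range n, epstil θ₀ (x i) * (stepFn θ₀ (x i).2 - stepFn θ (x i).2) := by
  have hrss := h.2 θ₀ hθ₀
  have hexp : ∀ i, mfn θ (x i) = mfn θ₀ (x i)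
      - 2 * (epstil θ₀ (x i) * (stepFn θ₀ (x i).2 - stepFn θ (x i).2))
      - (stepFn θ₀ (x i).2 - stepFn θ (x i).2) ^ 2 := fun i => by
    simp only [mfn, epstil, stepFn]; ring
  rw [Finset.expect_congr rfl fun i _ => hexp i, Finset.expect_sub_distrib,
    Finset.expect_sub_distrib, ← Finset.mul_expect] at hrss
  linarith

theorem expect_sq_stepFn_sub_le_mul (h : IsLeastSquares a b x n θ) (hθ₀ : θ₀.2.2 ∈ Icc a b) :
    𝔼 i ∈ Finset.range n, (stepFn θ₀ (x i).2 - stepFn θ (x i).2) ^ 2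
      ≤ 2 * (|θ₀.1| + |θ₀.2.1| + (|θ.1| + |θ.2.1|)) *
        (|𝔼 i ∈ Finset.range n, epstil θ₀ (x i)|
          + |𝔼 i ∈ Finset.range n, (Iic θ₀.2.2).indicator 1 (x i).2 * epstil θ₀ (x i)|
          + |𝔼 i ∈ Finset.range n, (Iic θ.2.2).indicator 1 (x i).2 * epstil θ₀ (x i)|) := by
  set T := |𝔼 i ∈ Finset.range n, epstil θ₀ (x i)|
  set A₀ := |𝔼 i ∈ Finset.range n, (Iic θ₀.2.2).indicator 1 (x i).2 * epstil θ₀ (x i)|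
  set A := |𝔼 i ∈ Finset.range n, (Iic θ.2.2).indicator 1 (x i).2 * epstil θ₀ (x i)|
  set C₀ := 𝔼 i ∈ Finset.range n, epstil θ₀ (x i) * stepFn θ₀ (x i).2
  set C := 𝔼 i ∈ Finset.range n, epstil θ₀ (x i) * stepFn θ (x i).2
  have hC : 𝔼 i ∈ Finset.range n, epstil θ₀ (x i) * (stepFn θ₀ (x i).2 - stepFn θ (x i).2)
      = C₀ - C := by
    simp only [C₀, C, mul_sub, Finset.expect_sub_distrib]
  calc _ ≤ -2 * (C₀ - C) := hC ▸ h.expect_sq_stepFn_sub_le hθ₀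
    _ ≤ 2 * (|C₀| + |C|) := by linarith [neg_abs_le (C₀ - C), abs_sub C₀ C]
    _ ≤ 2 * ((|θ₀.1| + |θ₀.2.1|) * (T + A₀) + (|θ.1| + |θ.2.1|) * (T + A)) := by
      gcongr
      · exact abs_expect_mul_stepFn_le _ (fun i => epstil θ₀ (x i)) (fun i => (x i).2) θ₀
      · exact abs_expect_mul_stepFn_le _ (fun i => epstil θ₀ (x i)) (fun i => (x i).2) θ
    _ ≤ _ := by
      have hK₀ : 0 ≤ |θ₀.1| + |θ₀.2.1| := by positivity
      have hK : 0 ≤ |θ.1| + |θ.2.1| := by positivity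
      nlinarith [mul_nonneg hK₀ (abs_nonneg (𝔼 i ∈ Finset.range n,
          (Iic θ.2.2).indicator 1 (x i).2 * epstil θ₀ (x i))),
        mul_nonneg hK (abs_nonneg (𝔼 i ∈ Finset.range n,
          (Iic θ₀.2.2).indicator 1 (x i).2 * epstil θ₀ (x i)))]

end IsLeastSquares

theorem tendsto_levels_and_stepFn_of_isLeastSquares {X : ℕ → ℝ × ℝ} {θ₀ : ℝ × ℝ × ℝ}
    {θh : ℕ → ℝ × ℝ × ℝ} {a b pa pb : ℝ} (hθ₀ : θ₀.2.2 ∈ Icc a b)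
    (hθ : ∀ n, IsLeastSquares a b X n (θh n))
    (hT : Tendsto (fun n => 𝔼 i ∈ Finset.range n, epstil θ₀ (X i)) atTop (𝓝 0))
    (hA : TendstoUniformlyOn (fun n ζ => 𝔼 i ∈ Finset.range n,
      (Iic ζ).indicator 1 (X i).2 * epstil θ₀ (X i)) 0 atTop (Icc a b))
    (hpa : Tendsto (fun n => 𝔼 i ∈ Finset.range n, (Iio a).indicator 1 (X i).2) atTop (𝓝 pa))
    (hpb : Tendsto (fun n => 𝔼 i ∈ Finset.range n, (Ioi b).indicator 1 (X i).2) atTop (𝓝 pb))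
    (hpa0 : 0 < pa) (hpb0 : 0 < pb) :
    Tendsto (fun n => |(θh n).1 - θ₀.1| + |(θh n).2.1 - θ₀.2.1|) atTop (𝓝 0) ∧
    Tendsto (fun n => 𝔼 i ∈ Finset.range n, (stepFn θ₀ (X i).2 - stepFn (θh n) (X i).2) ^ 2)
      atTop (𝓝 0) := by
  set v := fun n => |(θh n).1 - θ₀.1| + |(θh n).2.1 - θ₀.2.1|
  set D := fun n => 𝔼 i ∈ Finset.range n, (stepFn θ₀ (X i).2 - stepFn (θh n) (X i).2) ^ 2
  set A := fun n ζ => 𝔼 i ∈ Finset.range n, (Iic ζ).indicator 1 (X i).2 * epstil θ₀ (X i)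
  set s := fun n => |𝔼 i ∈ Finset.range n, epstil θ₀ (X i)| + |A n θ₀.2.2| + |A n (θh n).2.2|
  set K := |θ₀.1| + |θ₀.2.1| with hK
  set m := min pa pb / 2 with hm_def
  have hm : 0 < m := by positivity
  have hv0 : ∀ n, 0 ≤ v n := fun n => by positivity
  have hs0 : ∀ n, 0 ≤ s n := fun n => by positivity
  have hs : Tendsto s atTop (𝓝 0) := by
    simpa only [Pi.zero_apply, abs_zero, add_zero] using ((hT.abs.add (hA.tendsto_at hθ₀).abs).add
      (hA.tendsto_comp_of_eventually_mem (c := 0) (Eventually.of_forall fun n => (hθ n).1)).abs)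
  have hDs : ∀ n, D n ≤ 2 * (2 * K + v n) * s n := fun n => by
    refine ((hθ n).expect_sq_stepFn_sub_le_mul hθ₀).trans (mul_le_mul_of_nonneg_right ?_ (hs0 n))
    linarith [abs_sub_abs_le_abs_sub (θh n).1 θ₀.1, abs_sub_abs_le_abs_sub (θh n).2.1 θ₀.2.1]
  -- Together with `hDs`: `m v² ≤ 2 D ≤ 4 (2K + v) s`, a quadratic inequality for `v`.
  have hvD : ∀ᶠ n in atTop, m * v n ^ 2 ≤ 2 * D n := by
    filter_upwards [hpa.eventually (eventually_ge_nhds (show m < pa by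
        linarith [min_le_left pa pb])),
      hpb.eventually (eventually_ge_nhds (show m < pb by linarith [min_le_right pa pb]))]
      with n ha hb
    have hlow := expect_indicator_mul_sq_add_le (Finset.range n) (fun i => (X i).2) hθ₀ (hθ n).1
    nlinarith [sq_abs ((θh n).1 - θ₀.1), sq_abs ((θh n).2.1 - θ₀.2.1),
      sq_nonneg (|(θh n).1 - θ₀.1| - |(θh n).2.1 - θ₀.2.1|),
      sq_nonneg ((θh n).1 - θ₀.1), sq_nonneg ((θh n).2.1 - θ₀.2.1)]
  have hv : Tendsto v atTop (𝓝 0) := by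
    refine tendsto_zero_of_sq_le_mul_add (A := 8 * K / m) (B := 4 / m) (by positivity)
      (by positivity) hv0 hs0 hs ?_
    filter_upwards [hvD] with n hn
    rw [← mul_le_mul_iff_of_pos_left hm]
    have : m * (s n * (8 * K / m + 4 / m * v n)) = 4 * (2 * K + v n) * s n := by
      field_simp; ring
    linarith [hDs n]
  refine ⟨hv, squeeze_zero (fun n => Finset.expect_nonneg fun i _ => sq_nonneg _) hDs ?_⟩
  simpa using ((hv.const_add (2 * K)).const_mul 2).mul hs

theorem tendsto_centered_residual_moments {X : ℕ → ℝ × ℝ} {θ₀ : ℝ × ℝ × ℝ} {θh : ℕ → ℝ × ℝ × ℝ}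
    {a b pa pb σ2 μ₁ μ₃ : ℝ} (hθ₀ : θ₀.2.2 ∈ Icc a b) (hθ : ∀ n, IsLeastSquares a b X n (θh n))
    (hT : Tendsto (fun n => 𝔼 i ∈ Finset.range n, epstil θ₀ (X i)) atTop (𝓝 0))
    (hA : TendstoUniformlyOn (fun n ζ => 𝔼 i ∈ Finset.range n,
      (Iic ζ).indicator 1 (X i).2 * epstil θ₀ (X i)) 0 atTop (Icc a b))
    (hpa : Tendsto (fun n => 𝔼 i ∈ Finset.range n, (Iio a).indicator 1 (X i).2) atTop (𝓝 pa))
    (hpb : Tendsto (fun n => 𝔼 i ∈ Finset.range n, (Ioi b).indicator 1 (X i).2) atTop (𝓝 pb))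
    (hpa0 : 0 < pa) (hpb0 : 0 < pb)
    (h₂ : Tendsto (fun n => 𝔼 i ∈ Finset.range n, epstil θ₀ (X i) ^ 2) atTop (𝓝 σ2))
    (h₁ : Tendsto (fun n => 𝔼 i ∈ Finset.range n, |epstil θ₀ (X i)|) atTop (𝓝 μ₁))
    (h₃ : Tendsto (fun n => 𝔼 i ∈ Finset.range n, |epstil θ₀ (X i)| ^ 3) atTop (𝓝 μ₃)) :
    Tendsto (fun n => 𝔼 j ∈ Finset.range n,
        (epstil (θh n) (X j) - 𝔼 l ∈ Finset.range n, epstil (θh n) (X l)) ^ 2) atTop (𝓝 σ2) ∧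
    Tendsto (fun n => 𝔼 j ∈ Finset.range n,
        |epstil (θh n) (X j) - 𝔼 l ∈ Finset.range n, epstil (θh n) (X l)|) atTop (𝓝 μ₁) ∧
    IsBoundedUnder (· ≤ ·) atTop (fun n => 𝔼 j ∈ Finset.range n,
        |epstil (θh n) (X j) - 𝔼 l ∈ Finset.range n, epstil (θh n) (X l)| ^ 3) := by
  obtain ⟨hv, hD⟩ := tendsto_levels_and_stepFn_of_isLeastSquares hθ₀ hθ hT hA hpa hpb hpa0 hpb0
  have hd : Tendsto (fun n => 𝔼 i ∈ Finset.range n, (epstil (θh n) (X i) - epstil θ₀ (X i)) ^ 2)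
      atTop (𝓝 0) := by
    simpa only [epstil_sub_epstil] using hD
  simp only [fun n => (hθ n).expect_epstil_eq_zero, sub_zero]
  refine ⟨tendsto_expect_sq_of_tendsto_expect_sq_sub h₂ hd,
    tendsto_expect_abs_of_tendsto_expect_sq_sub h₁ hd,
    isBoundedUnder_expect_abs_pow (by positivity : 0 ≤ 1 + |θ₀.1 - θ₀.2.1|) h₃.isBoundedUnder_le ?_⟩
  filter_upwards [hv.eventually (eventually_le_nhds one_pos)] with n hn i _
  rw [epstil_sub_epstil]
  linarith [abs_stepFn_sub_le θ₀ (θh n) (X i).2]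

theorem measurable_epstil (θ : ℝ × ℝ × ℝ) : Measurable (epstil θ) :=
  measurable_fst.sub <| Measurable.ite (measurableSet_le measurable_snd measurable_const)
    measurable_const measurable_const

theorem ae_tendsto_expect_of_iIndepFun {Ω α : Type*} [MeasurableSpace Ω] [MeasurableSpace α]
    {P : Measure Ω} {μ : Measure α} {X : ℕ → Ω → α} (hX : ∀ i, Measurable (X i))
    (hlaw : ∀ i, P.map (X i) = μ) (hindep : iIndepFun X P) {φ : α → ℝ} (hφ : Measurable φ)
    (hint : Integrable φ μ) :
    ∀ᵐ ω ∂P, Tendsto (fun n => 𝔼 i ∈ Finset.range n, φ (X i ω)) atTop (𝓝 (∫ x, φ x ∂μ)) := by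
  have hlawφ : ∀ i, P.map (φ ∘ X i) = μ.map φ := fun i => by
    rw [← Measure.map_map hφ (hX i), hlaw]
  have hint0 : Integrable (φ ∘ X 0) P := by
    rw [← integrable_map_measure hφ.aestronglyMeasurable (hX 0).aemeasurable, hlaw]
    exact hint
  have hslln := strong_law_ae_real (fun i => φ ∘ X i) hint0
    (fun i j hij => (hindep.indepFun hij).comp hφ hφ)
    (fun i => ⟨(hφ.comp (hX i)).aemeasurable, (hφ.comp (hX 0)).aemeasurable, by
      rw [hlawφ, hlawφ]⟩)
  have hI : ∫ ω, φ (X 0 ω) ∂P = ∫ x, φ x ∂μ := by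
    rw [← hlaw 0, integral_map (hX 0).aemeasurable hφ.aestronglyMeasurable]
  simpa only [Finset.expect_eq_sum_div_card, Finset.card_range, hI, Function.comp_apply] using hslln

theorem ae_tendsto_expect_mul_epstil {Ω : Type*} [MeasurableSpace Ω] {P : Measure Ω}
    {α₀ β₀ ζ₀ : ℝ} {νZ νε : Measure ℝ} [IsFiniteMeasure νZ] [IsFiniteMeasure νε]
    {X : ℕ → Ω → ℝ × ℝ} (hX : ∀ i, Measurable (X i))
    (hlaw : ∀ i, P.map (X i) =
      (νZ.prod νε).map (fun p : ℝ × ℝ => ((if p.1 ≤ ζ₀ then α₀ else β₀) + p.2, p.1)))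
    (hindep : iIndepFun X P) {u v : ℝ → ℝ} (hu : Measurable u) (hv : Measurable v)
    (hu' : Integrable u νZ) (hv' : Integrable v νε) :
    ∀ᵐ ω ∂P, Tendsto
      (fun n => 𝔼 i ∈ Finset.range n, u (X i ω).2 * v (epstil (α₀, β₀, ζ₀) (X i ω)))
      atTop (𝓝 ((∫ z, u z ∂νZ) * ∫ e, v e ∂νε)) := by
  -- `X i` is the image of `(Z, ε) ∼ νZ ⊗ νε` under `T`, and `epstil (α₀, β₀, ζ₀)` recovers `ε`.
  set T := fun p : ℝ × ℝ => ((if p.1 ≤ ζ₀ then α₀ else β₀) + p.2, p.1)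
  have hT : Measurable T := (Measurable.ite (measurableSet_le measurable_fst measurable_const)
    measurable_const measurable_const |>.add measurable_snd).prodMk measurable_fst
  set φ := fun x : ℝ × ℝ => u x.2 * v (epstil (α₀, β₀, ζ₀) x)
  have hφ : Measurable φ := (hu.comp measurable_snd).mul (hv.comp (measurable_epstil _))
  have hφT : φ ∘ T = fun p => u p.1 * v p.2 := by
    funext p; simp [φ, T, epstil]
  have hint : Integrable φ ((νZ.prod νε).map T) := by
    rw [integrable_map_measure hφ.aestronglyMeasurable hT.aemeasurable, hφT]
    exact hu'.mul_prod hv'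
  have hI : ∫ x, φ x ∂(νZ.prod νε).map T = (∫ z, u z ∂νZ) * ∫ e, v e ∂νε := by
    rw [integral_map hT.aemeasurable hφ.aestronglyMeasurable, ← integral_prod_mul]
    exact congrArg (fun g => ∫ p, g p ∂(νZ.prod νε)) hφT
  simpa only [hI] using ae_tendsto_expect_of_iIndepFun hX hlaw hindep hφ hint

theorem ae_tendsto_expect_comp_epstil {Ω : Type*} [MeasurableSpace Ω] {P : Measure Ω}
    {α₀ β₀ ζ₀ : ℝ} {νZ νε : Measure ℝ} [IsProbabilityMeasure νZ] [IsFiniteMeasure νε]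
    {X : ℕ → Ω → ℝ × ℝ} (hX : ∀ i, Measurable (X i))
    (hlaw : ∀ i, P.map (X i) =
      (νZ.prod νε).map (fun p : ℝ × ℝ => ((if p.1 ≤ ζ₀ then α₀ else β₀) + p.2, p.1)))
    (hindep : iIndepFun X P) {v : ℝ → ℝ} (hv : Measurable v) (hv' : Integrable v νε) :
    ∀ᵐ ω ∂P, Tendsto (fun n => 𝔼 i ∈ Finset.range n, v (epstil (α₀, β₀, ζ₀) (X i ω)))
      atTop (𝓝 (∫ e, v e ∂νε)) := by
  simpa using ae_tendsto_expect_mul_epstil (u := fun _ => 1) hX hlaw hindep measurable_const hv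
    (integrable_const 1) hv'

theorem ae_tendsto_expect_indicator {Ω : Type*} [MeasurableSpace Ω] {P : Measure Ω}
    {α₀ β₀ ζ₀ : ℝ} {νZ νε : Measure ℝ} [IsFiniteMeasure νZ] [IsProbabilityMeasure νε]
    {X : ℕ → Ω → ℝ × ℝ} (hX : ∀ i, Measurable (X i))
    (hlaw : ∀ i, P.map (X i) =
      (νZ.prod νε).map (fun p : ℝ × ℝ => ((if p.1 ≤ ζ₀ then α₀ else β₀) + p.2, p.1)))
    (hindep : iIndepFun X P) {s : Set ℝ} (hs : MeasurableSet s) :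
    ∀ᵐ ω ∂P, Tendsto (fun n => 𝔼 i ∈ Finset.range n, s.indicator 1 (X i ω).2)
      atTop (𝓝 (νZ.real s)) := by
  simpa [integral_indicator_one hs] using ae_tendsto_expect_mul_epstil (u := s.indicator 1)
    (v := fun _ => 1) hX hlaw hindep (measurable_const.indicator hs) measurable_const
    ((integrable_const 1).indicator hs) (integrable_const 1)

theorem integral_max_neg_zero_eq {ν : Measure ℝ} (hint : Integrable id ν)
    (hmean : ∫ e, e ∂ν = 0) : ∫ e, max (-e) 0 ∂ν = ∫ e, max e 0 ∂ν := by
  have h := integral_sub hint.pos_part hint.neg_part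
  simp only [id, max_zero_sub_eq_self, hmean] at h
  linarith

theorem ae_tendstoUniformlyOn_expect_indicator_mul_epstil {Ω : Type*} [MeasurableSpace Ω]
    {P : Measure Ω} {α₀ β₀ ζ₀ : ℝ} {νZ νε : Measure ℝ} [IsProbabilityMeasure νZ]
    [NullSingletonClass νZ] [IsProbabilityMeasure νε] {X : ℕ → Ω → ℝ × ℝ}
    (hX : ∀ i, Measurable (X i))
    (hlaw : ∀ i, P.map (X i) =
      (νZ.prod νε).map (fun p : ℝ × ℝ => ((if p.1 ≤ ζ₀ then α₀ else β₀) + p.2, p.1)))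
    (hindep : iIndepFun X P) (hint : Integrable id νε) (hmean : ∫ e, e ∂νε = 0) (a b : ℝ) :
    ∀ᵐ ω ∂P, TendstoUniformlyOn
      (fun n ζ => 𝔼 i ∈ Finset.range n, (Iic ζ).indicator 1 (X i ω).2 * epstil (α₀, β₀, ζ₀) (X i ω))
      0 atTop (Icc a b) := by
  -- Both `ε⁺` and `ε⁻` give processes monotone in `ζ`, with the same limit since `E ε = 0`.
  set L := fun ζ => cdf νZ ζ * ∫ e, max e 0 ∂νε
  have hpart : ∀ {v : ℝ → ℝ}, Measurable v → Integrable v νε → (∀ e, 0 ≤ v e) →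
      ∫ e, v e ∂νε = ∫ e, max e 0 ∂νε → ∀ᵐ ω ∂P,
        TendstoUniformlyOn (fun n ζ => 𝔼 i ∈ Finset.range n,
          (Iic ζ).indicator 1 (X i ω).2 * v (epstil (α₀, β₀, ζ₀) (X i ω))) L atTop (Icc a b) := by
    intro v hv hv' hv0 hvI
    have hq : ∀ q : ℚ, ∀ᵐ ω ∂P, Tendsto (fun n => 𝔼 i ∈ Finset.range n,
        (Iic (q : ℝ)).indicator 1 (X i ω).2 * v (epstil (α₀, β₀, ζ₀) (X i ω))) atTop (𝓝 (L q)) :=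
      fun q => by
        simpa only [integral_indicator_one measurableSet_Iic, ← cdf_eq_real, hvI] using
          ae_tendsto_expect_mul_epstil (u := (Iic (q : ℝ)).indicator 1) hX hlaw hindep
            (measurable_const.indicator measurableSet_Iic) hv
            ((integrable_const 1).indicator measurableSet_Iic) hv'
    filter_upwards [ae_all_iff.2 hq] with ω hω
    exact tendstoUniformlyOn_Icc_of_monotone_of_dense
      (fun n => monotone_expect_indicator_Iic_mul _ _ _ fun i => hv0 _)
      (continuous_cdf.mul continuous_const) Rat.denseRange_cast
      (Set.forall_mem_range.2 hω) a b
  filter_upwards [hpart (v := fun e => max e 0) (measurable_id.max measurable_const)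
      hint.pos_part (fun e => le_max_right e 0) rfl,
    hpart (v := fun e => max (-e) 0) (measurable_id.neg.max measurable_const) hint.neg_part
      (fun e => le_max_right (-e) 0) (integral_max_neg_zero_eq hint hmean)] with ω hpos hneg
  convert hpos.sub hneg using 1
  · funext n ζ
    simp only [Pi.sub_apply, ← Finset.expect_sub_distrib, ← mul_sub, max_zero_sub_eq_self]
  · simp

theorem stmt13_general
    {Ω : Type} [MeasurableSpace Ω] (P : Measure Ω)
    -- model parameters
    (α₀ β₀ a b ζ₀ σ2 : ℝ) (f : ℝ → ℝ)
    (νZ νε : Measure ℝ) [IsProbabilityMeasure νZ] [IsProbabilityMeasure νε]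
    (ℙd : Measure (ℝ × ℝ))
    (hζ₀ : ζ₀ ∈ Icc a b)
    -- `Z` has a bounded density `f`, positive on `[a,b]`, bounded away from `0` near `ζ₀`
    (hνZ : νZ = volume.withDensity (fun z => ENNReal.ofReal (f z)))
    (hZa : 0 < νZ (Iio a)) (hZb : 0 < νZ (Ioi b))
    -- `ε` has a continuous distribution, mean `0`, variance `σ² > 0`, finite third moment
    (hεmean : ∫ x, x ∂νε = 0)
    (hεL2 : Integrable (fun x => x ^ 2) νε)
    (hεvar : ∫ x, x ^ 2 ∂νε = σ2)
    (hεL3 : Integrable (fun x => |x| ^ 3) νε)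
    -- `ℙd` is the law of `(Y, Z)` with `Y = α₀·1{Z≤ζ₀} + β₀·1{Z>ζ₀} + ε`, `ε ⟂ Z`
    (hℙd : ℙd = Measure.map
      (fun p : ℝ × ℝ => ((if p.1 ≤ ζ₀ then α₀ else β₀) + p.2, p.1)) (νZ.prod νε))
    -- i.i.d. data `(X_i) = (Y_i, Z_i)` with law `ℙd`
    (Xd : ℕ → Ω → ℝ × ℝ) (hXdMeas : ∀ i, Measurable (Xd i))
    (hXdLaw : ∀ i, Measure.map (Xd i) P = ℙd)
    (hXdIndep : ProbabilityTheory.iIndepFun Xd P)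
    -- the least squares estimator `θ̂_n = (α̂_n, β̂_n, ζ̂_n)`, a measurable maximizer
    -- of `M_n` over `Θ = ℝ² × [a,b]`
    (θhat : ℕ → Ω → ℝ × ℝ × ℝ)
    (hθhatMax : ∀ n, ∀ᵐ ω ∂P, (θhat n ω).2.2 ∈ Icc a b ∧
      ∀ θ : ℝ × ℝ × ℝ, θ.2.2 ∈ Icc a b →
        (n : ℝ)⁻¹ * ∑ i ∈ Finset.range n, mfn θ (Xd i ω)
          ≤ (n : ℝ)⁻¹ * ∑ i ∈ Finset.range n, mfn (θhat n ω) (Xd i ω)) :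
    -- conclusion
    (∀ᵐ ω ∂P, Tendsto (fun n : ℕ => (n : ℝ)⁻¹ * ∑ j ∈ Finset.range n,
        (epstil (θhat n ω) (Xd j ω)
          - (n : ℝ)⁻¹ * ∑ l ∈ Finset.range n, epstil (θhat n ω) (Xd l ω)) ^ 2)
      atTop (nhds σ2)) ∧
    (∀ᵐ ω ∂P, Tendsto (fun n : ℕ => (n : ℝ)⁻¹ * ∑ j ∈ Finset.range n,
        |epstil (θhat n ω) (Xd j ω)
          - (n : ℝ)⁻¹ * ∑ l ∈ Finset.range n, epstil (θhat n ω) (Xd l ω)|)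
      atTop (nhds (∫ x : ℝ, |x| ∂νε))) ∧
    (∀ᵐ ω ∂P, IsBoundedUnder (· ≤ ·) atTop (fun n : ℕ =>
      (n : ℝ)⁻¹ * ∑ j ∈ Finset.range n,
        |epstil (θhat n ω) (Xd j ω)
          - (n : ℝ)⁻¹ * ∑ l ∈ Finset.range n, epstil (θhat n ω) (Xd l ω)| ^ 3)) := by
  have hlaw : ∀ i, P.map (Xd i) = _ := fun i => (hXdLaw i).trans hℙd
  have hε : Integrable id νε :=
    ((memLp_two_iff_integrable_sq aestronglyMeasurable_id).2 hεL2).integrable one_le_two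
  have : NullSingletonClass νZ :=
    ⟨fun z => hνZ ▸ withDensity_absolutelyContinuous _ _ (Real.volume_singleton (a := z))⟩
  have hθ : ∀ᵐ ω ∂P, ∀ n, IsLeastSquares a b (Xd · ω) n (θhat n ω) :=
    ae_all_iff.2 fun n => (hθhatMax n).mono fun ω h => by
      simpa only [IsLeastSquares, expect_range_eq_inv_mul_sum] using h
  simp only [← expect_range_eq_inv_mul_sum, ← eventually_and]
  filter_upwards [hθ, ae_tendsto_expect_comp_epstil hXdMeas hlaw hXdIndep measurable_id hε,
    ae_tendsto_expect_comp_epstil hXdMeas hlaw hXdIndep (measurable_id.pow_const 2) hεL2,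
    ae_tendsto_expect_comp_epstil hXdMeas hlaw hXdIndep measurable_id.abs hε.abs,
    ae_tendsto_expect_comp_epstil hXdMeas hlaw hXdIndep (measurable_id.abs.pow_const 3) hεL3,
    ae_tendsto_expect_indicator hXdMeas hlaw hXdIndep measurableSet_Iio,
    ae_tendsto_expect_indicator hXdMeas hlaw hXdIndep measurableSet_Ioi,
    ae_tendstoUniformlyOn_expect_indicator_mul_epstil hXdMeas hlaw hXdIndep hε hεmean a b]
    with ω hθω hT h₂ h₁ h₃ hpa hpb hA
  exact tendsto_centered_residual_moments hζ₀ hθω (by simpa [hεmean] using hT) hA hpa hpb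
    (ENNReal.toReal_pos hZa.ne' (measure_ne_top _ _))
    (ENNReal.toReal_pos hZb.ne' (measure_ne_top _ _)) (by simpa [hεvar] using h₂) h₁ h₃

/-- Lemma 4.8(iii)–(v): moments of the centered residual empirical distribution:
`∫x² dℙ_n^ε → σ²` a.s., `∫|x| dℙ_n^ε → E|ε|` a.s., and
`limsup_n ∫|x|³ dℙ_n^ε < ∞` a.s. -/
theorem stmt13
    {Ω : Type} [MeasurableSpace Ω] (P : Measure Ω) [IsProbabilityMeasure P]
    -- model parameters
    (α₀ β₀ a b ζ₀ σ2 Mbd : ℝ) (f : ℝ → ℝ)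
    (νZ νε : Measure ℝ) [IsProbabilityMeasure νZ] [IsProbabilityMeasure νε]
    (ℙd : Measure (ℝ × ℝ))
    (hab : a < b) (hζ₀ : ζ₀ ∈ Icc a b) (hαβ : α₀ ≠ β₀)
    -- `Z` has a bounded density `f`, positive on `[a,b]`, bounded away from `0` near `ζ₀`
    (hνZ : νZ = volume.withDensity (fun z => ENNReal.ofReal (f z)))
    (hfbd : ∃ C, ∀ z, f z ≤ C)
    (hfpos : ∀ z ∈ Icc a b, 0 < f z)
    (hfloc : ∃ η₀ > (0 : ℝ), ∃ κ > (0 : ℝ), ∀ z, |z - ζ₀| ≤ η₀ → κ < f z)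
    (hZa : 0 < νZ (Iio a)) (hZb : 0 < νZ (Ioi b))
    -- `ε` has a continuous distribution, mean `0`, variance `σ² > 0`, finite third moment
    (hεcont : ∀ x : ℝ, νε {x} = 0)
    (hεmean : ∫ x, x ∂νε = 0)
    (hεL2 : Integrable (fun x => x ^ 2) νε)
    (hεvar : ∫ x, x ^ 2 ∂νε = σ2) (hσ : 0 < σ2)
    (hεL3 : Integrable (fun x => |x| ^ 3) νε)
    -- `ℙd` is the law of `(Y, Z)` with `Y = α₀·1{Z≤ζ₀} + β₀·1{Z>ζ₀} + ε`, `ε ⟂ Z`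
    (hℙd : ℙd = Measure.map
      (fun p : ℝ × ℝ => ((if p.1 ≤ ζ₀ then α₀ else β₀) + p.2, p.1)) (νZ.prod νε))
    -- i.i.d. data `(X_i) = (Y_i, Z_i)` with law `ℙd`
    (Xd : ℕ → Ω → ℝ × ℝ) (hXdMeas : ∀ i, Measurable (Xd i))
    (hXdLaw : ∀ i, Measure.map (Xd i) P = ℙd)
    (hXdIndep : ProbabilityTheory.iIndepFun Xd P)
    -- the least squares estimator `θ̂_n = (α̂_n, β̂_n, ζ̂_n)`, a measurable maximizer
    -- of `M_n` over `Θ = ℝ² × [a,b]`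
    (θhat : ℕ → Ω → ℝ × ℝ × ℝ) (hθhatMeas : ∀ n, Measurable (θhat n))
    (hθhatMax : ∀ n, ∀ᵐ ω ∂P, (θhat n ω).2.2 ∈ Icc a b ∧
      ∀ θ : ℝ × ℝ × ℝ, θ.2.2 ∈ Icc a b →
        (n : ℝ)⁻¹ * ∑ i ∈ Finset.range n, mfn θ (Xd i ω)
          ≤ (n : ℝ)⁻¹ * ∑ i ∈ Finset.range n, mfn (θhat n ω) (Xd i ω)) :
    -- conclusion
    (∀ᵐ ω ∂P, Tendsto (fun n : ℕ => (n : ℝ)⁻¹ * ∑ j ∈ Finset.range n,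
        (epstil (θhat n ω) (Xd j ω)
          - (n : ℝ)⁻¹ * ∑ l ∈ Finset.range n, epstil (θhat n ω) (Xd l ω)) ^ 2)
      atTop (nhds σ2)) ∧
    (∀ᵐ ω ∂P, Tendsto (fun n : ℕ => (n : ℝ)⁻¹ * ∑ j ∈ Finset.range n,
        |epstil (θhat n ω) (Xd j ω)
          - (n : ℝ)⁻¹ * ∑ l ∈ Finset.range n, epstil (θhat n ω) (Xd l ω)|)
      atTop (nhds (∫ x : ℝ, |x| ∂νε))) ∧
    (∀ᵐ ω ∂P, IsBoundedUnder (· ≤ ·) atTop (fun n : ℕ =>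
      (n : ℝ)⁻¹ * ∑ j ∈ Finset.range n,
        |epstil (θhat n ω) (Xd j ω)
          - (n : ℝ)⁻¹ * ∑ l ∈ Finset.range n, epstil (θhat n ω) (Xd l ω)| ^ 3)) :=
  stmt13_general P α₀ β₀ a b ζ₀ σ2 f νZ νε ℙd hζ₀ hνZ hZa hZb hεmean hεL2 hεvar hεL3 hℙd Xd hXdMeas
    hXdLaw hXdIndep θhat hθhatMax
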